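/- arXiv:2411.12697 — 6 statements merged into one kernel-verified Lean document; each statement's English description precedes it below -/
import Mathlib

section
/- Proposition 1 (model-based AIA accuracy for least squares regression): the number of indices i with ŝ_i ≠ s_i is at most 4·E·S/θ_s²; equivalently, the accuracy of the model-based attribute inference attack, (1/S)·|{i : ŝ_i = s_i}|, is at least 1 − 4E/θ_s². -/
/-- Proposition 1 (model-based AIA accuracy for least squares regression).
Setting: `P : Matrix (Fin S) (Fin (d-1)) ℝ` the public features, `s` the binary
sensitive attributes, `y` the targets, model `(θp, θs)` with `θs ≠ 0`.
Residuals `e i = y i - ((P *ᵥ θp) i + s i * θs)`, mean square error `E = ‖e‖²/S`,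
relaxed reconstruction `s̃ = (y - P *ᵥ θp) / θs`, thresholded reconstruction
`ŝ i = 1` if `s̃ i ≥ 1/2` else `0`.
Conclusion: the number of erroneously reconstructed attributes is at most
`4·E·S/θs²`, and equivalently the accuracy `|{i : ŝ i = s i}|/S ≥ 1 - 4E/θs²`. -/
theorem aia_accuracy_least_squares
    (S d : ℕ) (hS : 1 ≤ S) (hd : 2 ≤ d)
    (P : Matrix (Fin S) (Fin (d - 1)) ℝ)
    (s : Fin S → ℝ) (hs : ∀ i, s i = 0 ∨ s i = 1)
    (y : Fin S → ℝ)
    (θp : Fin (d - 1) → ℝ) (θs : ℝ) (hθs : θs ≠ 0)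
    (e : Fin S → ℝ) (he : ∀ i, e i = y i - ((P.mulVec θp) i + s i * θs))
    (E : ℝ) (hE : E = (∑ i, (e i) ^ 2) / S)
    (stilde : Fin S → ℝ) (hst : ∀ i, stilde i = (y i - (P.mulVec θp) i) / θs)
    (shat : Fin S → ℝ)
    (hsh : ∀ i, shat i = if (1 : ℝ) / 2 ≤ stilde i then 1 else 0) :
    ((Finset.univ.filter (fun i => shat i ≠ s i)).card : ℝ) ≤ 4 * E * S / θs ^ 2
    ∧ (1 : ℝ) - 4 * E / θs ^ 2
        ≤ ((Finset.univ.filter (fun i => shat i = s i)).card : ℝ) / S := by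
  have hSpos : (0 : ℝ) < S := by exact_mod_cast hS
  have hθ2 : (0 : ℝ) < θs ^ 2 := by positivity
  -- key pointwise bound on bad indices
  have key : ∀ i, shat i ≠ s i → θs ^ 2 / 4 ≤ (e i) ^ 2 := by
    intro i hi
    have hdiff : e i = (stilde i - s i) * θs := by
      rw [he, hst]; field_simp; ring
    have habs : (1 : ℝ) / 2 ≤ |stilde i - s i| := by
      rcases hs i with h0 | h1
      · have : shat i = 1 := by
          rw [hsh]
          by_contra hc
          rw [hsh] at hi
          split_ifs at hi hc with h
          · exact hc rfl
          · exact hi (by rw [h0])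
        rw [hsh] at this
        split_ifs at this with h
        · rw [h0, sub_zero]
          calc (1:ℝ)/2 ≤ stilde i := h
            _ ≤ |stilde i| := le_abs_self _
        · norm_num at this
      · have : shat i = 0 := by
          rw [hsh]
          by_contra hc
          rw [hsh] at hi
          split_ifs at hi hc with h
          · exact hi (by rw [h1])
          · exact hc rfl
        rw [hsh] at this
        split_ifs at this with h
        · norm_num at this
        · rw [h1]
          push_neg at h
          have : stilde i - 1 < -(1/2) := by linarith
          calc (1:ℝ)/2 ≤ -(stilde i - 1) := by linarith
            _ ≤ |stilde i - 1| := neg_le_abs _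
    have : (1:ℝ)/2 * |θs| ≤ |stilde i - s i| * |θs| := by
      apply mul_le_mul_of_nonneg_right habs (abs_nonneg _)
    have h2 : (1:ℝ)/2 * |θs| ≤ |e i| := by
      rwa [hdiff, abs_mul]
    have := mul_self_le_mul_self (by positivity) h2
    calc θs ^ 2 / 4 = (1/2 * |θs|) * (1/2 * |θs|) := by
          rw [show (1:ℝ)/2 * |θs| * (1/2 * |θs|) = |θs|^2/4 by ring, sq_abs]
      _ ≤ |e i| * |e i| := this
      _ = (e i)^2 := by rw [← sq_abs]; ring
  set B := Finset.univ.filter (fun i => shat i ≠ s i) with hB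
  have hsum : (B.card : ℝ) * (θs ^ 2 / 4) ≤ ∑ i, (e i) ^ 2 := by
    calc (B.card : ℝ) * (θs ^ 2 / 4) = ∑ _i ∈ B, θs ^ 2 / 4 := by
          rw [Finset.sum_const, nsmul_eq_mul]
      _ ≤ ∑ i ∈ B, (e i) ^ 2 := by
          apply Finset.sum_le_sum
          intro i hi
          exact key i (Finset.mem_filter.mp hi).2
      _ ≤ ∑ i, (e i) ^ 2 := by
          apply Finset.sum_le_sum_of_subset_of_nonneg (Finset.filter_subset _ _)
          intro i _ _; positivity
  have hES : ∑ i, (e i) ^ 2 = E * S := by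
    rw [hE]; field_simp
  have main : (B.card : ℝ) ≤ 4 * E * S / θs ^ 2 := by
    rw [le_div_iff₀ hθ2]
    nlinarith [hsum, hES]
  refine ⟨main, ?_⟩
  have hcard : ((Finset.univ.filter (fun i => shat i = s i)).card : ℝ) = S - B.card := by
    have := Finset.card_filter_add_card_filter_not
      (s := (Finset.univ : Finset (Fin S))) (p := fun i => shat i = s i)
    have hc : (Finset.univ.filter (fun i => shat i = s i)).card + B.card = S := by
      simpa [hB, Finset.card_univ] using this
    have : ((Finset.univ.filter (fun i => shat i = s i)).card : ℝ) + B.card = S := by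
      exact_mod_cast hc
    linarith
  rw [hcard, le_div_iff₀ hSpos]
  have : 4 * E / θs ^ 2 * S = 4 * E * S / θs ^ 2 := by ring
  nlinarith [main]
end

section
/- Proposition 2 (exact reconstruction of the optimal local model): assume η ≤ S/(2λ_max(H)) and K ≥ 1. Suppose the adversary observes d+1 pairs (θ_0^{(j)}, θ_K^{(j)}), j = 1, …, d+1, where each θ_K^{(j)} is obtained from θ_0^{(j)} by K full-batch gradient steps θ ↦ θ − η∇L(θ). Let Θ_in ∈ ℝ^{(d+1)×d} have j-th row (θ_0^{(j)})ᵀ and let Θ_out ∈ ℝ^{(d+1)×(d+1)} have j-th row ((θ_0^{(j)} − θ_K^{(j)})ᵀ, 1). If Θ_out is invertible, then the last row of Θ_out^{-1}·Θ_in equals (θ*)ᵀ; i.e., the adversary exactly recovers the client's optimal local model from d+1 eavesdropped exchanges. -/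
open Matrix

lemma myConjPow {n : Type*} [Fintype n] [DecidableEq n]
    (U M : Matrix n n ℝ) (hU : star U * U = 1) (hU' : U * star U = 1) (K : ℕ) :
    (U * M * star U) ^ K = U * M ^ K * star U := by
  induction K with
  | zero => simpa using hU'.symm
  | succ k ih =>
    rw [pow_succ, ih, pow_succ]
    rw [mul_assoc (U * M ^ k), ← mul_assoc (star U) (U * M), ← mul_assoc (star U) U, hU,
      one_mul, ← mul_assoc, ← mul_assoc, mul_assoc U]

/-- Proposition 2 (exact reconstruction of the optimal local model): with
`H = Xᵀ X` positive definite, `θ* = H⁻¹ Xᵀ y`, and one full-batch gradient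
step `θ ↦ θ − η ∇L(θ)` where `∇L(θ) = (2/S) H (θ − θ*)`, assume
`η ≤ S/(2 λ_max(H))` and `K ≥ 1`.  If the adversary observes `d + 1` pairs
`(θ₀ⱼ, θKⱼ)` where each `θKⱼ` is the result of `K` full-batch gradient steps
from `θ₀ⱼ`, forms `Θ_in` with rows `θ₀ⱼ` and `Θ_out` with rows
`((θ₀ⱼ − θKⱼ)ᵀ, 1)`, and `Θ_out` is invertible, then the last row of
`Θ_out⁻¹ · Θ_in` equals `θ*`. -/
theorem exact_local_model_reconstruction
    (S d : ℕ) (hS : 1 ≤ S) (hd : 1 ≤ d)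
    (X : Matrix (Fin S) (Fin d) ℝ) (hrank : X.rank = d)
    (y : Fin S → ℝ)
    (H : Matrix (Fin d) (Fin d) ℝ) (hH : H = Xᵀ * X) (hpd : H.PosDef)
    (hHerm : H.IsHermitian)
    (lamMax : ℝ) (hmax : IsGreatest (Set.range hHerm.eigenvalues) lamMax)
    (θstar : Fin d → ℝ) (hθstar : θstar = H⁻¹ *ᵥ (Xᵀ *ᵥ y))
    (η : ℝ) (hη : 0 < η) (hηle : η ≤ S / (2 * lamMax))
    (K : ℕ) (hK : 1 ≤ K)
    (θ0 θK : Fin (d + 1) → Fin d → ℝ)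
    (hiter : ∀ j, θK j =
      (fun θ => θ - η • ((2 / (S : ℝ)) • (H *ᵥ (θ - θstar))))^[K] (θ0 j))
    (Θin : Matrix (Fin (d + 1)) (Fin d) ℝ) (hin : Θin = Matrix.of θ0)
    (Θout : Matrix (Fin (d + 1)) (Fin (d + 1)) ℝ)
    (hout : Θout = Matrix.of (fun j => Fin.snoc (θ0 j - θK j) (1 : ℝ)))
    (hinv : IsUnit Θout.det) :
    (Θout⁻¹ * Θin) (Fin.last d) = θstar := by
  have hS0 : (0 : ℝ) < S := by exact_mod_cast hS
  set c : ℝ := η * (2 / S) with hc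
  have hc0 : 0 < c := by positivity
  set f : (Fin d → ℝ) → (Fin d → ℝ) :=
    fun θ => θ - η • ((2 / (S : ℝ)) • (H *ᵥ (θ - θstar))) with hf
  set A : Matrix (Fin d) (Fin d) ℝ := 1 - c • H with hA
  have hstep : ∀ θ, f θ - θstar = A *ᵥ (θ - θstar) := by
    intro θ
    rw [hA, sub_mulVec, one_mulVec, smul_mulVec, hf]
    simp only [smul_smul, hc]
    abel
  have hiterate : ∀ θ (k : ℕ), f^[k] θ - θstar = (A ^ k) *ᵥ (θ - θstar) := by
    intro θ k
    induction k with
    | zero => simp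
    | succ k ih =>
      rw [Function.iterate_succ_apply', hstep, ih, mulVec_mulVec, ← pow_succ']
  set W : Matrix (Fin d) (Fin d) ℝ := 1 - A ^ K with hW
  have hWj : ∀ j, θ0 j - θK j = W *ᵥ (θ0 j - θstar) := by
    intro j
    rw [hW, sub_mulVec, one_mulVec, ← hiterate (θ0 j) K, hiter j]
    abel
  -- invertibility of W via the spectral theorem
  set U : Matrix (Fin d) (Fin d) ℝ := (hHerm.eigenvectorUnitary : Matrix (Fin d) (Fin d) ℝ)
    with hUdef
  set ev : Fin d → ℝ := hHerm.eigenvalues with hev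
  have hU : star U * U = 1 := Matrix.mem_unitaryGroup_iff'.mp hHerm.eigenvectorUnitary.2
  have hU' : U * star U = 1 := Matrix.mem_unitaryGroup_iff.mp hHerm.eigenvectorUnitary.2
  have hspec : H = U * diagonal ev * star U := by
    have := hHerm.spectral_theorem
    simpa using this
  have hdiag1 : diagonal (fun i => 1 - c * ev i) = 1 - c • diagonal ev := by
    ext i j
    by_cases h : i = j <;> simp [diagonal, h, Matrix.one_apply]
  have hAspec : A = U * diagonal (fun i => 1 - c * ev i) * star U := by
    rw [hA, hdiag1, mul_sub, sub_mul, mul_one, hU', hspec, Matrix.mul_smul, Matrix.smul_mul]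
  have hAK : A ^ K = U * diagonal (fun i => (1 - c * ev i) ^ K) * star U := by
    rw [hAspec, myConjPow U _ hU hU' K, diagonal_pow]
    rfl
  have hdiag2 : diagonal (fun i => 1 - (1 - c * ev i) ^ K)
      = 1 - diagonal (fun i => (1 - c * ev i) ^ K) := by
    ext i j
    by_cases h : i = j <;> simp [diagonal, h, Matrix.one_apply]
  have hWspec : W = U * diagonal (fun i => 1 - (1 - c * ev i) ^ K) * star U := by
    rw [hW, hdiag2, mul_sub, sub_mul, mul_one, hU', hAK]
  have hUdet : U.det * (star U).det = 1 := by rw [← det_mul, hU', det_one]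
  have hdet : W.det = ∏ i, (1 - (1 - c * ev i) ^ K) := by
    rw [hWspec, det_mul, det_mul, det_diagonal, mul_comm U.det, mul_assoc, hUdet, mul_one]
  -- positivity of the eigen-factors
  have hevpos : ∀ i, 0 < ev i := fun i => hpd.eigenvalues_pos i
  have hle : ∀ i, ev i ≤ lamMax := fun i => hmax.2 ⟨i, rfl⟩
  have hlam0 : 0 < lamMax := lt_of_lt_of_le (hevpos ⟨0, hd⟩) (hle ⟨0, hd⟩)
  have h1 : η * (2 * lamMax) ≤ S := (le_div_iff₀ (by positivity)).mp hηle
  have hcl : c * lamMax ≤ 1 := by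
    have heq : c * lamMax = η * (2 * lamMax) / S := by rw [hc]; ring
    rw [heq, div_le_one hS0]
    exact h1
  have hfacpos : ∀ i, 0 < 1 - (1 - c * ev i) ^ K := by
    intro i
    have hx0 : 0 ≤ 1 - c * ev i := by nlinarith [hle i, (hevpos i).le]
    have hx1 : 1 - c * ev i < 1 := by nlinarith [hevpos i]
    have := pow_lt_one₀ hx0 hx1 (by omega : K ≠ 0)
    linarith
  have hdetW : IsUnit W.det := by
    rw [hdet]
    exact (Finset.prod_pos fun i _ => hfacpos i).ne'.isUnit
  have hWinv : W⁻¹ * W = 1 := nonsing_inv_mul W hdetW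
  have hrec : ∀ j, W⁻¹ *ᵥ (θ0 j - θK j) = θ0 j - θstar := by
    intro j
    rw [hWj j, mulVec_mulVec, hWinv, one_mulVec]
  set B : Matrix (Fin (d + 1)) (Fin d) ℝ :=
    Matrix.of (Fin.snoc (fun i : Fin d => fun k => W⁻¹ k i) θstar) with hB
  have hΘB : Θout * B = Θin := by
    rw [hin, hout, hB]
    ext j k
    simp only [mul_apply, of_apply, Fin.sum_univ_castSucc, Fin.snoc_castSucc, Fin.snoc_last,
      one_mul]
    have hsum : ∑ i : Fin d, (θ0 j - θK j) i * W⁻¹ k i = (W⁻¹ *ᵥ (θ0 j - θK j)) k := by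
      simp [mulVec, dotProduct, mul_comm]
    rw [hsum, hrec j, Pi.sub_apply]
    ring
  have hfinal : Θout⁻¹ * Θin = B := by
    rw [← hΘB, ← Matrix.mul_assoc, nonsing_inv_mul _ hinv, Matrix.one_mul]
  rw [hfinal, hB]
  exact funext fun k => by simp [Fin.snoc_last]
end

section
/- Explicit minimizer of the hard-instance local objective: for d ≥ 1, the function f : ℝ^d → ℝ defined by f(θ) = Σ_{i=1}^{d} θ_i² − Σ_{i=1}^{d−1} θ_i·θ_{i+1} − θ_1 is strictly convex and attains its unique global minimum at the point θ* with coordinates θ*_i = 1 − i/(d+1) for i = 1, …, d. -/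
/-!
With `d = n + 1`, `f θ = Q θ - θ₀` for the quadratic form `Q θ = ∑ θᵢ² - ∑ θᵢ θᵢ₊₁`, and
`2 Q θ = θ₀² + θₙ² + ∑ (θᵢ - θᵢ₊₁)²`, so `Q` is positive definite. A positive definite quadratic
form minus a linear form `ℓ` is strictly convex, and if `x₀` satisfies `polar Q x₀ = ℓ` then
`Q x - ℓ x = Q x₀ - ℓ x₀ + Q (x - x₀)`. For the affine sequence `θ*` every difference
`θ*ᵢ - θ*ᵢ₊₁` equals `θ*ₙ = 1/(n+2) = 1 - θ*₀`, and the polarized sum-of-squares identity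
telescopes to `polar Q θ* v = v₀`.
-/

open Finset QuadraticMap

section

variable {E : Type*} [AddCommGroup E] [Module ℝ E] (Q : QuadraticMap ℝ E ℝ)

theorem QuadraticMap.map_smul_add_smul (t s : ℝ) (x y : E) :
    Q (t • x + s • y) = t ^ 2 * Q x + s ^ 2 * Q y + t * s * polar Q x y := by
  rw [QuadraticMap.map_add (⇑Q), Q.map_smul, Q.map_smul, polar_smul_left, polar_smul_right]
  simp only [smul_eq_mul]
  ring

theorem QuadraticMap.map_sub_eq_sub_polar (x y : E) : Q (x - y) = Q x + Q y - polar Q x y := by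
  rw [sub_eq_add_neg, QuadraticMap.map_add (⇑Q), Q.map_neg, polar_neg_right]
  ring

variable {Q}

theorem QuadraticMap.PosDef.strictConvexOn (hQ : Q.PosDef) : StrictConvexOn ℝ Set.univ Q := by
  refine ⟨convex_univ, fun x _ y _ hxy t s ht hs hts => ?_⟩
  have hpos : 0 < t * s * Q (x - y) := mul_pos (mul_pos ht hs) (hQ _ (sub_ne_zero.mpr hxy))
  rw [smul_eq_mul, smul_eq_mul, Q.map_smul_add_smul]
  rw [Q.map_sub_eq_sub_polar] at hpos
  obtain rfl : s = 1 - t := by linarith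
  nlinarith

theorem QuadraticMap.sub_linear_eq_add_map_sub (ℓ : E →ₗ[ℝ] ℝ) {x₀ : E}
    (hx₀ : ∀ v, polar Q x₀ v = ℓ v) (x : E) : Q x - ℓ x = Q x₀ - ℓ x₀ + Q (x - x₀) := by
  have hself : 2 * Q x₀ = ℓ x₀ := by rw [← hx₀, polar_self, two_smul, two_mul]
  rw [Q.map_sub_eq_sub_polar, polar_comm, hx₀]
  linear_combination -hself

theorem QuadraticMap.PosDef.sub_linear_lt_of_ne (hQ : Q.PosDef) (ℓ : E →ₗ[ℝ] ℝ) {x₀ : E}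
    (hx₀ : ∀ v, polar Q x₀ v = ℓ v) {x : E} (hx : x ≠ x₀) : Q x₀ - ℓ x₀ < Q x - ℓ x := by
  rw [Q.sub_linear_eq_add_map_sub ℓ hx₀ x]
  linarith [hQ _ (sub_ne_zero.mpr hx)]

end

theorem Fin.sum_dite_val_add_one_lt {M : Type*} [AddCommMonoid M] {n : ℕ}
    (g : Fin (n + 1) → Fin (n + 1) → M) :
    ∑ i : Fin (n + 1), (if h : (i : ℕ) + 1 < n + 1 then g i ⟨(i : ℕ) + 1, h⟩ else 0)
      = ∑ i : Fin n, g i.castSucc i.succ := by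
  simp [Fin.sum_univ_castSucc, Fin.succ]

/-- `θ ↦ θᵀ H_c θ` for the tridiagonal matrix `H_c` of the paper. -/
def chainForm (n : ℕ) : QuadraticMap ℝ (Fin (n + 1) → ℝ) ℝ :=
  ∑ i, proj i i - ∑ i : Fin n, proj i.castSucc i.succ

namespace chainForm

variable {n : ℕ}

theorem apply (a : Fin (n + 1) → ℝ) :
    chainForm n a = ∑ i, a i ^ 2 - ∑ i : Fin n, a i.castSucc * a i.succ := by
  simp [chainForm, proj_apply, _root_.sq]

theorem polar_eq (a b : Fin (n + 1) → ℝ) :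
    polar (chainForm n) a b = a 0 * b 0 + a (Fin.last n) * b (Fin.last n)
      + ∑ i : Fin n, (a i.castSucc - a i.succ) * (b i.castSucc - b i.succ) := by
  have hsq : ∑ i, (a + b) i ^ 2 - ∑ i, a i ^ 2 - ∑ i, b i ^ 2 = 2 * ∑ i, a i * b i := by
    rw [← sum_sub_distrib, ← sum_sub_distrib, mul_sum]
    exact sum_congr rfl fun i _ => by simp only [Pi.add_apply]; ring
  have hadj : ∑ i : Fin n, (a + b) i.castSucc * (a + b) i.succ
      - ∑ i : Fin n, a i.castSucc * a i.succ - ∑ i : Fin n, b i.castSucc * b i.succ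
      = ∑ i : Fin n, (a i.castSucc * b i.succ + a i.succ * b i.castSucc) := by
    rw [← sum_sub_distrib, ← sum_sub_distrib]
    exact sum_congr rfl fun i _ => by simp only [Pi.add_apply]; ring
  have hdiff : ∑ i : Fin n, (a i.castSucc - a i.succ) * (b i.castSucc - b i.succ)
      = ∑ i : Fin n, a i.castSucc * b i.castSucc + ∑ i : Fin n, a i.succ * b i.succ
        - ∑ i : Fin n, (a i.castSucc * b i.succ + a i.succ * b i.castSucc) := by
    rw [← sum_add_distrib, ← sum_sub_distrib]
    exact sum_congr rfl fun i _ => by ring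
  rw [polar, apply, apply, apply, hdiff]
  linear_combination hsq - hadj + Fin.sum_univ_castSucc (fun i => a i * b i)
    + Fin.sum_univ_succ (fun i => a i * b i)

theorem two_mul_apply (a : Fin (n + 1) → ℝ) :
    2 * chainForm n a = a 0 ^ 2 + a (Fin.last n) ^ 2
      + ∑ i : Fin n, (a i.castSucc - a i.succ) ^ 2 := by
  have h := (chainForm n).polar_self a
  rw [polar_eq, nsmul_eq_mul, Nat.cast_ofNat] at h
  simp only [_root_.sq]
  linarith

theorem posDef : (chainForm n).PosDef := by
  intro a ha
  have hsum : 0 ≤ ∑ i : Fin n, (a i.castSucc - a i.succ) ^ 2 :=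
    sum_nonneg fun i _ => sq_nonneg _
  by_contra! hle
  have h0 : a 0 = 0 := by nlinarith [two_mul_apply a, sq_nonneg (a (Fin.last n))]
  have hstep : ∀ i : Fin n, a i.castSucc = a i.succ := by
    intro i
    have := single_le_sum (fun j _ => sq_nonneg (a j.castSucc - a j.succ)) (mem_univ i)
    nlinarith [two_mul_apply a, sq_nonneg (a 0), sq_nonneg (a (Fin.last n)),
      sq_nonneg (a i.castSucc - a i.succ)]
  exact ha (funext fun i => Fin.induction h0 (fun i hi => (hstep i).symm.trans hi) i)

theorem polar_eq_apply_zero {a : Fin (n + 1) → ℝ}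
    (ha : ∀ i : Fin (n + 1), a i = 1 - ((i : ℝ) + 1) / (n + 2))
    (b : Fin (n + 1) → ℝ) : polar (chainForm n) a b = b 0 := by
  have hstep : ∀ i : Fin n, a i.castSucc - a i.succ = 1 / (n + 2) := by
    intro i
    rw [ha, ha, Fin.val_castSucc, Fin.val_succ]
    field_simp
    push_cast
    ring
  have htel : ∑ i : Fin n, (b i.castSucc - b i.succ) = b 0 - b (Fin.last n) := by
    rw [sum_sub_distrib]
    linarith [Fin.sum_univ_castSucc b, Fin.sum_univ_succ b]
  rw [polar_eq]
  simp only [hstep]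
  rw [← mul_sum, htel, ha 0, ha (Fin.last n), Fin.val_zero, Fin.val_last]
  field_simp
  ring

end chainForm

/-- Explicit minimizer of the hard-instance local objective: for `d ≥ 1`, the
function `f(θ) = ∑_{i=1}^{d} θ_i² − ∑_{i=1}^{d−1} θ_i θ_{i+1} − θ_1` is
strictly convex and attains its unique global minimum at the point `θ*` with
coordinates `θ*_i = 1 − i/(d+1)` (1-indexed; 0-indexed below). -/
theorem hard_instance_unique_minimizer
    (d : ℕ) (hd : 1 ≤ d)
    (f : (Fin d → ℝ) → ℝ)
    (hf : ∀ θ, f θ = ∑ i, (θ i) ^ 2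
        - ∑ i : Fin d, (if h : (i : ℕ) + 1 < d then θ i * θ ⟨(i : ℕ) + 1, h⟩ else 0)
        - θ ⟨0, hd⟩)
    (θstar : Fin d → ℝ)
    (hθstar : ∀ i : Fin d, θstar i = 1 - ((i : ℕ) + 1 : ℝ) / (d + 1)) :
    StrictConvexOn ℝ Set.univ f
    ∧ ∀ θ : Fin d → ℝ, θ ≠ θstar → f θstar < f θ := by
  obtain ⟨n, rfl⟩ : ∃ n, d = n + 1 := ⟨d - 1, by omega⟩
  obtain rfl : f = fun θ => chainForm n θ - LinearMap.proj (R := ℝ) 0 θ :=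
    funext fun θ => by
      rw [hf, chainForm.apply, Fin.sum_dite_val_add_one_lt fun i j : Fin (n + 1) => θ i * θ j]
      rfl
  have hstar : ∀ v, polar (chainForm n) θstar v = LinearMap.proj (R := ℝ) 0 v :=
    chainForm.polar_eq_apply_zero fun i => by rw [hθstar]; push_cast; ring
  exact ⟨chainForm.posDef.strictConvexOn.sub_concaveOn
      ((LinearMap.proj 0).concaveOn convex_univ),
    fun θ hθ => chainForm.posDef.sub_linear_lt_of_ne _ hstar hθ⟩
end

section
/- Coordinate zero-pattern of gradient descent in the hard instance: let θ(0) = 0 ∈ ℝ^d and θ(t+1) = θ(t) − η·g(θ(t)) for t ≥ 0. Then for every t ≥ 0 and every coordinate j with t + 1 ≤ j ≤ d, one has θ(t)_j = 0; i.e., after t iterations only the first t coordinates of the iterate can be nonzero. -/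
/-- Coordinate zero-pattern of gradient descent in the hard instance: with
`g(θ)_1 = 2n θ_1 − θ_2 − 1`, `g(θ)_j = 2n θ_j − θ_{j−1} − θ_{j+1}` for
`1 < j < d`, and `g(θ)_d = 2n θ_d − θ_{d−1}` (1-indexed; 0-indexed below),
if `θ(0) = 0` and `θ(t+1) = θ(t) − η g(θ(t))`, then after `t` iterations only
the first `t` coordinates of the iterate can be nonzero, i.e. `θ(t)_j = 0`
for every coordinate `j` with `t + 1 ≤ j ≤ d` (1-indexed). -/
theorem hard_instance_zero_pattern
    (d : ℕ) (hd : 2 ≤ d) (n : ℝ) (hn : 1 ≤ n) (η : ℝ) (hη : 0 < η)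
    (g : (Fin d → ℝ) → Fin d → ℝ)
    (hg : ∀ θ (j : Fin d), g θ j =
      2 * n * θ j
        - (if h : (j : ℕ) + 1 < d then θ ⟨(j : ℕ) + 1, h⟩ else 0)
        - (if 0 < (j : ℕ) then θ ⟨(j : ℕ) - 1, by omega⟩ else 0)
        - (if (j : ℕ) = 0 then 1 else 0))
    (θ : ℕ → Fin d → ℝ)
    (h0 : θ 0 = 0)
    (hstep : ∀ t, θ (t + 1) = θ t - η • g (θ t)) :
    ∀ (t : ℕ) (j : Fin d), t ≤ (j : ℕ) → θ t j = 0 := by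
  intro t
  induction t with
  | zero => intro j _; simp [h0]
  | succ t ih =>
    intro j hj
    have hjt : t ≤ (j : ℕ) := by omega
    have h1 : θ t j = 0 := ih j hjt
    have h2 : g (θ t) j = 0 := by
      rw [hg, h1]
      have hb : ¬ (j : ℕ) = 0 := by omega
      rw [if_neg hb, if_pos (by omega : 0 < (j : ℕ))]
      have h3 : θ t ⟨(j : ℕ) - 1, by omega⟩ = 0 := ih _ (by simp; omega)
      rw [h3]
      split
      · have h4 : θ t ⟨(j : ℕ) + 1, by omega⟩ = 0 := ih _ (by simp; omega)
        rw [h4]; ring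
      · ring
    rw [hstep]
    simp [h1, h2]
end

section
/- All coordinates of the global optimum in the hard instance are nonzero: if d ≥ 2, n ≥ 1, and θ ∈ ℝ^d satisfies g(θ) = 0 (i.e., 2n·θ_1 − θ_2 = 1, 2n·θ_j = θ_{j−1} + θ_{j+1} for 1 < j < d, and 2n·θ_d = θ_{d−1}), then θ_j ≠ 0 for every j ∈ {1, …, d}. -/
noncomputable def hcSeq (n : ℝ) : ℕ → ℝ
  | 0 => 1
  | 1 => 2 * n
  | (k + 2) => 2 * n * hcSeq n (k + 1) - hcSeq n k

lemma hcSeq_ge (n : ℝ) (hn : 1 ≤ n) : ∀ k, 1 ≤ hcSeq n k ∧ hcSeq n k + 1 ≤ hcSeq n (k + 1) := by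
  intro k
  induction k with
  | zero => simp [hcSeq]; nlinarith
  | succ k ih =>
    obtain ⟨h1, h2⟩ := ih
    refine ⟨by linarith, ?_⟩
    show hcSeq n (k+1) + 1 ≤ hcSeq n (k + 2)
    simp only [hcSeq]
    nlinarith

/-- All coordinates of the global optimum in the hard instance are nonzero:
if `d ≥ 2`, `n ≥ 1`, and `θ ∈ ℝ^d` satisfies the stationarity conditions
`2n θ_1 − θ_2 = 1`, `2n θ_j = θ_{j−1} + θ_{j+1}` for `1 < j < d`, and
`2n θ_d = θ_{d−1}` (1-indexed; 0-indexed below), then `θ_j ≠ 0` for every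
`j ∈ {1, …, d}`. -/
theorem hard_instance_optimum_nonzero
    (d : ℕ) (hd : 2 ≤ d) (n : ℝ) (hn : 1 ≤ n)
    (θ : Fin d → ℝ)
    (hfirst : 2 * n * θ ⟨0, by omega⟩ - θ ⟨1, by omega⟩ = 1)
    (hmid : ∀ (j : ℕ) (hj0 : 0 < j) (hj1 : j < d - 1),
      2 * n * θ ⟨j, by omega⟩ = θ ⟨j - 1, by omega⟩ + θ ⟨j + 1, by omega⟩)
    (hlast : 2 * n * θ ⟨d - 1, by omega⟩ = θ ⟨d - 2, by omega⟩) :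
    ∀ j : Fin d, θ j ≠ 0 := by
  have hL : ∀ k (hk : k < d), θ ⟨d - 1 - k, by omega⟩ = hcSeq n k * θ ⟨d - 1, by omega⟩ := by
    intro k
    induction k using Nat.twoStepInduction with
    | zero => intro hk; simp [hcSeq]
    | one =>
      intro hk
      have : (⟨d - 1 - 1, by omega⟩ : Fin d) = ⟨d - 2, by omega⟩ := by simp only [Fin.mk.injEq]; omega
      rw [this]
      simp only [hcSeq]
      linarith [hlast]
    | more k ih1 ih2 =>
      intro hk
      have hm := hmid (d - 2 - k) (by omega) (by omega)
      have e1 : (⟨d - 2 - k, by omega⟩ : Fin d) = ⟨d - 1 - (k + 1), by omega⟩ :=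
        by simp only [Fin.mk.injEq]; omega
      have e2 : (⟨d - 2 - k - 1, by omega⟩ : Fin d) = ⟨d - 1 - (k + 2), by omega⟩ :=
        by simp only [Fin.mk.injEq]; omega
      have e3 : (⟨d - 2 - k + 1, by omega⟩ : Fin d) = ⟨d - 1 - k, by omega⟩ :=
        by simp only [Fin.mk.injEq]; omega
      rw [e1, e2, e3] at hm
      rw [ih1 (by omega), ih2 (by omega)] at hm
      show θ _ = hcSeq n (k + 2) * _
      simp only [hcSeq]
      linarith
  set θL := θ ⟨d - 1, by omega⟩ with hθL
  have h0 := hL (d - 1) (by omega)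
  have h1 := hL (d - 2) (by omega)
  have e0 : (⟨d - 1 - (d - 1), by omega⟩ : Fin d) = ⟨0, by omega⟩ := by simp only [Fin.mk.injEq]; omega
  have e1 : (⟨d - 1 - (d - 2), by omega⟩ : Fin d) = ⟨1, by omega⟩ := by simp only [Fin.mk.injEq]; omega
  rw [e0] at h0; rw [e1] at h1
  have hcd : hcSeq n d = 2 * n * hcSeq n (d - 1) - hcSeq n (d - 2) := by
    have : d = (d - 2) + 2 := by omega
    rw [this]
    simp only [hcSeq]
    congr 2 <;> omega
  have key : hcSeq n d * θL = 1 := by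
    rw [hcd]; rw [h0, h1] at hfirst; linarith
  have hcd1 : 1 ≤ hcSeq n d := (hcSeq_ge n hn d).1
  have hθLne : θL ≠ 0 := by
    intro h; rw [h, mul_zero] at key; norm_num at key
  intro j
  have hj := hL (d - 1 - j.val) (by omega)
  have ej : (⟨d - 1 - (d - 1 - j.val), by omega⟩ : Fin d) = j := Fin.ext (by simp; omega)
  rw [ej] at hj
  rw [hj]
  have : 1 ≤ hcSeq n (d - 1 - j.val) := (hcSeq_ge n hn _).1
  exact mul_ne_zero (by linarith) hθLne
end

section
/- Label-only equivalence of model-based AIA for logistic classification: for every public-feature vector x_p ∈ ℝ^{d−1} and every θ_p ∈ ℝ^{d−1}, if θ_s > 0 then ℓ(y) < ℓ(1−y), and if θ_s < 0 then ℓ(1−y) < ℓ(y). Consequently, the unique minimizer over s ∈ {0,1} of the binary cross-entropy loss equals y when θ_s > 0 and equals 1−y when θ_s < 0; it depends only on the label y and the sign of θ_s, and not on the public features x_p. -/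
open Matrix Real

/-!
The loss at label 1 is `-log p`, decreasing in `p`, and at label 0 it is `-log (1 - p)`,
increasing in `p`. Composed with the increasing sigmoid, the loss at label `y` is monotone in the
logit `z(s) = θ_p ⬝ x_p + θ_s s`, in a direction fixed by `y` alone. Since `z(y)` and `z(1 - y)`
differ by `±θ_s`, the sign of `θ_s` decides which of the two is smaller, whatever `θ_p ⬝ x_p` is.
-/

noncomputable def binaryCrossEntropy (y p : ℝ) : ℝ := -(y * log p + (1 - y) * log (1 - p))

lemma binaryCrossEntropy_one_sigmoid_strictAnti :
    StrictAnti fun z => binaryCrossEntropy 1 (sigmoid z) := fun a b hab => by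
  simp only [binaryCrossEntropy, sub_self, zero_mul, add_zero, one_mul, neg_lt_neg_iff]
  exact log_lt_log (sigmoid_pos a) (sigmoid_lt hab)

lemma binaryCrossEntropy_zero_sigmoid_strictMono :
    StrictMono fun z => binaryCrossEntropy 0 (sigmoid z) := fun a b hab => by
  simp only [binaryCrossEntropy, zero_mul, sub_zero, one_mul, zero_add, neg_lt_neg_iff]
  exact log_lt_log (sub_pos.2 (sigmoid_lt_one b)) (sub_lt_sub_left (sigmoid_lt hab) 1)

section LabelFlip

variable {y θ : ℝ}

lemma binaryCrossEntropy_sigmoid_lt_flip_of_pos (hy : y = 0 ∨ y = 1) (c : ℝ) (hθ : 0 < θ) :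
    binaryCrossEntropy y (sigmoid (c + θ * y)) <
      binaryCrossEntropy y (sigmoid (c + θ * (1 - y))) := by
  rcases hy with rfl | rfl <;> simp only [mul_zero, add_zero, sub_zero, mul_one, sub_self]
  · exact binaryCrossEntropy_zero_sigmoid_strictMono (by linarith)
  · exact binaryCrossEntropy_one_sigmoid_strictAnti (by linarith)

lemma binaryCrossEntropy_sigmoid_flip_lt_of_neg (hy : y = 0 ∨ y = 1) (c : ℝ) (hθ : θ < 0) :
    binaryCrossEntropy y (sigmoid (c + θ * (1 - y))) <
      binaryCrossEntropy y (sigmoid (c + θ * y)) := by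
  rcases hy with rfl | rfl <;> simp only [mul_zero, add_zero, sub_zero, mul_one, sub_self]
  · exact binaryCrossEntropy_zero_sigmoid_strictMono (by linarith)
  · exact binaryCrossEntropy_one_sigmoid_strictAnti (by linarith)

end LabelFlip

lemma eq_one_sub_of_ne_of_binary {y s : ℝ} (hy : y = 0 ∨ y = 1) (hs : s = 0 ∨ s = 1)
    (hne : s ≠ y) : s = 1 - y := by
  rcases hy with rfl | rfl <;> rcases hs with rfl | rfl <;> norm_num at *

theorem logistic_aia_label_only_general
    (d : ℕ)
    (xp θp : Fin (d - 1) → ℝ) (θs : ℝ)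
    (y : ℝ) (hy : y = 0 ∨ y = 1)
    (z : ℝ → ℝ) (hz : ∀ s, z s = θp ⬝ᵥ xp + θs * s)
    (p : ℝ → ℝ) (hp : ∀ s, p s = 1 / (1 + Real.exp (-(z s))))
    (ℓ : ℝ → ℝ)
    (hℓ : ∀ s, ℓ s = -(y * Real.log (p s) + (1 - y) * Real.log (1 - p s))) :
    (0 < θs → ℓ y < ℓ (1 - y))
    ∧ (θs < 0 → ℓ (1 - y) < ℓ y)
    ∧ (0 < θs → ∀ s : ℝ, (s = 0 ∨ s = 1) → s ≠ y → ℓ y < ℓ s)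
    ∧ (θs < 0 → ∀ s : ℝ, (s = 0 ∨ s = 1) → s ≠ 1 - y → ℓ (1 - y) < ℓ s) := by
  have hℓ_eq : ∀ s, ℓ s = binaryCrossEntropy y (sigmoid (θp ⬝ᵥ xp + θs * s)) := fun s => by
    rw [hℓ, hp, hz, one_div, binaryCrossEntropy, sigmoid_def]
  have hpos : 0 < θs → ℓ y < ℓ (1 - y) := fun hθ => by
    simpa only [hℓ_eq] using binaryCrossEntropy_sigmoid_lt_flip_of_pos hy _ hθ
  have hneg : θs < 0 → ℓ (1 - y) < ℓ y := fun hθ => by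
    simpa only [hℓ_eq] using binaryCrossEntropy_sigmoid_flip_lt_of_neg hy _ hθ
  refine ⟨hpos, hneg, fun hθ s hs hne => ?_, fun hθ s hs hne => ?_⟩
  · rw [eq_one_sub_of_ne_of_binary hy hs hne]
    exact hpos hθ
  · obtain rfl : s = y := by_contra fun h => hne (eq_one_sub_of_ne_of_binary hy hs h)
    exact hneg hθ

/-- Label-only equivalence of model-based AIA for logistic classification:
for a linear classifier with sigmoid output `p(s) = 1/(1 + e^{−z(s)})`,
`z(s) = θ_p ⬝ x_p + θ_s s`, binary label `y ∈ {0,1}`, and binary cross-entropy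
loss `ℓ(s) = −(y ln p(s) + (1−y) ln(1−p(s)))`: for every `x_p` and `θ_p`, if
`θ_s > 0` then `ℓ(y) < ℓ(1−y)`, and if `θ_s < 0` then `ℓ(1−y) < ℓ(y)`.
Consequently the unique minimizer of `ℓ` over `s ∈ {0,1}` equals `y` when
`θ_s > 0` and `1−y` when `θ_s < 0`; it depends only on the label `y` and the
sign of `θ_s`, not on the public features `x_p`. -/
theorem logistic_aia_label_only
    (d : ℕ) (hd : 2 ≤ d)
    (xp θp : Fin (d - 1) → ℝ) (θs : ℝ) (hθs : θs ≠ 0)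
    (y : ℝ) (hy : y = 0 ∨ y = 1)
    (z : ℝ → ℝ) (hz : ∀ s, z s = θp ⬝ᵥ xp + θs * s)
    (p : ℝ → ℝ) (hp : ∀ s, p s = 1 / (1 + Real.exp (-(z s))))
    (ℓ : ℝ → ℝ)
    (hℓ : ∀ s, ℓ s = -(y * Real.log (p s) + (1 - y) * Real.log (1 - p s))) :
    (0 < θs → ℓ y < ℓ (1 - y))
    ∧ (θs < 0 → ℓ (1 - y) < ℓ y)
    ∧ (0 < θs → ∀ s : ℝ, (s = 0 ∨ s = 1) → s ≠ y → ℓ y < ℓ s)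
    ∧ (θs < 0 → ∀ s : ℝ, (s = 0 ∨ s = 1) → s ≠ 1 - y → ℓ (1 - y) < ℓ s) :=
  logistic_aia_label_only_general d xp θp θs y hy z hz p hp ℓ hℓ
end
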